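/- (Unreachability of λ = 0.8 for LinOSS-IM and LinOSS-IMEX.) For all real A ≥ 0 and Δt ∈ (0,1], neither λ^IM+(A,Δt) nor λ^IM−(A,Δt) equals the real number 0.8 (viewed in ℂ); and for all real A ≥ 0 and Δt ∈ (0,1] with Δt²·A ≤ 4, neither λ^IMEX+(A,Δt) nor λ^IMEX−(A,Δt) equals 0.8. -/

import Mathlib

/-- The LinOSS-IM per-component eigenvalues (`s = 1` for `+`, `s = -1` for `−`). -/
noncomputable def lamIM (A Δt : ℝ) (s : ℝ) : ℂ :=
  ((1 / (1 + Δt ^ 2 * A) : ℝ) : ℂ) +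
    (s : ℂ) * Complex.I * ((Δt * Real.sqrt A / (1 + Δt ^ 2 * A) : ℝ) : ℂ)

/-- The LinOSS-IMEX per-component eigenvalues (`s = 1` for `+`, `s = -1` for `−`). -/
noncomputable def lamIMEX (A Δt : ℝ) (s : ℝ) : ℂ :=
  (((2 - Δt ^ 2 * A) / 2 : ℝ) : ℂ) +
    (s : ℂ) * (Complex.I / 2) * ((Real.sqrt (Δt ^ 2 * A * (4 - Δt ^ 2 * A)) : ℝ) : ℂ)

/-! A real eigenvalue has vanishing imaginary part. For LinOSS-IM this forces `Δt √A = 0`, hence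
`Δt² A = 0` and the eigenvalue is `1`. For LinOSS-IMEX it forces `x (4 - x) ≤ 0` with `x = Δt² A`
(the real square root vanishes exactly there), so `x ≤ 0` or `4 ≤ x` and the eigenvalue
`(2 - x) / 2` lies outside `(-1, 1)`. -/

@[simp]
lemma lamIM_re (A Δt s : ℝ) : (lamIM A Δt s).re = 1 / (1 + Δt ^ 2 * A) := by
  simp only [lamIM, Complex.add_re, Complex.mul_re, Complex.mul_im,
    Complex.I_re, Complex.I_im, Complex.ofReal_re, Complex.ofReal_im]
  ring

@[simp]
lemma lamIM_im (A Δt s : ℝ) :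
    (lamIM A Δt s).im = s * (Δt * Real.sqrt A / (1 + Δt ^ 2 * A)) := by
  simp only [lamIM, Complex.add_im, Complex.mul_re, Complex.mul_im,
    Complex.I_re, Complex.I_im, Complex.ofReal_re, Complex.ofReal_im]
  ring

@[simp]
lemma lamIMEX_re (A Δt s : ℝ) : (lamIMEX A Δt s).re = (2 - Δt ^ 2 * A) / 2 := by
  simp only [lamIMEX, Complex.add_re, Complex.mul_re, Complex.mul_im, Complex.div_ofNat_re,
    Complex.div_ofNat_im, Complex.I_re, Complex.I_im, Complex.ofReal_re, Complex.ofReal_im]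
  ring

@[simp]
lemma lamIMEX_im (A Δt s : ℝ) :
    (lamIMEX A Δt s).im = s / 2 * Real.sqrt (Δt ^ 2 * A * (4 - Δt ^ 2 * A)) := by
  simp only [lamIMEX, Complex.add_im, Complex.mul_re, Complex.mul_im, Complex.div_ofNat_re,
    Complex.div_ofNat_im, Complex.I_re, Complex.I_im, Complex.ofReal_re, Complex.ofReal_im]
  ring

lemma eq_one_of_lamIM_eq_ofReal {A Δt s r : ℝ} (hA : 0 ≤ A) (hs : s ≠ 0)
    (h : lamIM A Δt s = r) : r = 1 := by
  have hden : 0 < 1 + Δt ^ 2 * A := by positivity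
  have him : Δt * Real.sqrt A = 0 := by
    simpa [hs, hden.ne'] using congrArg Complex.im h
  have hx : Δt ^ 2 * A = 0 := by
    rw [← Real.sq_sqrt hA, ← mul_pow, him, sq, zero_mul]
  simpa [hx] using (congrArg Complex.re h).symm

lemma one_le_abs_of_lamIMEX_eq_ofReal {A Δt s r : ℝ} (hs : s ≠ 0)
    (h : lamIMEX A Δt s = r) : 1 ≤ |r| := by
  set x := Δt ^ 2 * A
  have hre : r = (2 - x) / 2 := by simpa using (congrArg Complex.re h).symm
  have hx : x * (4 - x) ≤ 0 := by
    simpa [hs, Real.sqrt_eq_zero'] using congrArg Complex.im h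
  rw [hre, le_abs]
  rcases le_or_gt x 0 with hx0 | hx0
  · left; linarith
  · right; nlinarith

theorem linoss_unreachable_eigenvalue :
    (∀ A Δt : ℝ, 0 ≤ A → Δt ∈ Set.Ioc (0 : ℝ) 1 →
      lamIM A Δt 1 ≠ ((0.8 : ℝ) : ℂ) ∧ lamIM A Δt (-1) ≠ ((0.8 : ℝ) : ℂ)) ∧
    (∀ A Δt : ℝ, 0 ≤ A → Δt ∈ Set.Ioc (0 : ℝ) 1 → Δt ^ 2 * A ≤ 4 →
      lamIMEX A Δt 1 ≠ ((0.8 : ℝ) : ℂ) ∧ lamIMEX A Δt (-1) ≠ ((0.8 : ℝ) : ℂ)) := by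
  have hIM : ∀ {A Δt s : ℝ}, 0 ≤ A → s ≠ 0 → lamIM A Δt s ≠ ((0.8 : ℝ) : ℂ) :=
    fun hA hs h => absurd (eq_one_of_lamIM_eq_ofReal hA hs h) (by norm_num)
  have hIMEX : ∀ {A Δt s : ℝ}, s ≠ 0 → lamIMEX A Δt s ≠ ((0.8 : ℝ) : ℂ) :=
    fun hs h => absurd (one_le_abs_of_lamIMEX_eq_ofReal hs h) (by norm_num [abs_of_pos])
  exact ⟨fun _ _ hA _ => ⟨hIM hA one_ne_zero, hIM hA (by norm_num)⟩,
    fun _ _ _ _ _ => ⟨hIMEX one_ne_zero, hIMEX (by norm_num)⟩⟩
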